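/- Let n₁, n₂ ≥ 1 and fix an edge e = {a,b} of the complete bipartite graph K_{n₁,n₂}. The number X of acyclic orientations of K_{n₁,n₂} that remain acyclic when the direction of e is reversed equals 1 + ∑_{k=2}^{min(n₁,n₂)+1} ((k−2)!)² · [ (2k−3)·S(n₁+1,k)·S(n₂+1,k) − (k−2)·(S(n₁+1,k)·S(n₂,k) + S(n₁,k)·S(n₂+1,k)) − S(n₁,k)·S(n₂,k) ]. -/

import Mathlib

/-- An orientation of a simple graph `G`, encoded as a function `f` where `f u v = true`
means the edge `{u,v}` is directed from `u` to `v`. Every edge gets exactly one direction,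
and non-edges carry no direction. -/
def IsOrientation {V : Type*} (G : SimpleGraph V) (f : V → V → Bool) : Prop :=
  (∀ u v, G.Adj u v → f u v = !f v u) ∧ ∀ u v, ¬ G.Adj u v → f u v = false

/-- The directed graph given by `f` contains no directed cycle. -/
def OrientAcyclic {V : Type*} (f : V → V → Bool) : Prop :=
  ∀ v, ¬ Relation.TransGen (fun a b => f a b = true) v v

/-- The number of acyclic orientations of `G`. -/
noncomputable def numAcyclicOrientations {V : Type*} (G : SimpleGraph V) : ℕ :=
  Nat.card {f : V → V → Bool // IsOrientation G f ∧ OrientAcyclic f}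

/-- The Stirling number of the second kind `S(n,k)`: the number of partitions of an
`n`-element set into `k` non-empty parts. -/
noncomputable def stirling2 (n k : ℕ) : ℕ :=
  Nat.card {P : Finpartition (Finset.univ : Finset (Fin n)) // P.parts.card = k}

/-- Reverse the direction of the single edge `{x,y}` in the orientation `f`. -/
def flipEdge {V : Type*} [DecidableEq V] (f : V → V → Bool) (x y : V) : V → V → Bool :=
  fun u v => if (u = x ∧ v = y) ∨ (u = y ∧ v = x) then !f u v else f u v

/-!
Record an orientation of `K_{m,n}` as the Boolean matrix `M` with `M a b` iff the edge points
from `a` to `b`. It is acyclic iff the rows of `M` form a chain under inclusion: a directed cycle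
needs two incomparable rows, and along a chain the rows give a potential that decreases on every
edge. If the distinct nonempty rows are `R₁ ⊂ ⋯ ⊂ R_k`, then `M a b ↔ k + 1 ≤ σ a + τ b`, where
`σ a` counts the `Rᵢ` contained in row `a` and `τ b` the `Rᵢ` containing `b`; both `σ` and `τ`
take every value in `1, …, k`, and every such pair `(σ, τ)` comes from exactly one chain matrix.
Reversing the edge `a₀b₀` keeps the rows a chain iff `σ a₀ + τ b₀ ∈ {k, k + 1}`.

A map `[m] → {0, …, k}` taking every value in `1, …, k` is a surjection from an `(m + 1)`-set,
so there are `k! S(m + 1, k + 1)` of them; `k! S(m, k + 1)` of them send `a₀` to `0`, and the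
rest are spread evenly over the `k` nonzero values of `σ a₀`. Summing the products of these
counts over the pairs `(σ a₀, τ b₀)` with sum `k` or `k + 1` gives the summand for `k + 1`.
-/

open Finset Function
open scoped Nat

lemma Nat.card_eq_sum_card_fiberwise {X M : Type*} [Finite X] [DecidableEq M] {p : X → Prop}
    {f : X → M} {t : Finset M} (h : ∀ x, p x → f x ∈ t) :
    Nat.card {x // p x} = ∑ i ∈ t, Nat.card {x // p x ∧ f x = i} := by
  classical
  have := Fintype.ofFinite X
  simp only [Nat.card_eq_fintype_card, Fintype.card_subtype]
  rw [Finset.card_eq_sum_card_fiberwise (f := f) (t := t) fun x hx => h x (by simpa using hx)]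
  simp only [filter_filter]

lemma Finset.image_card_filter_le_of_isChain {γ : Type*} [PartialOrder γ] [DecidableLE γ]
    {S : Finset γ} (hS : IsChain (· ≤ ·) (S : Set γ)) :
    S.image (fun s => #{t ∈ S | t ≤ s}) = Icc 1 #S := by
  have hinj : Set.InjOn (fun s => #{t ∈ S | t ≤ s}) S := by
    have key : ∀ s ∈ S, ∀ s' ∈ S, s ≤ s' → #{t ∈ S | t ≤ s} = #{t ∈ S | t ≤ s'} → s = s' :=
      fun s _ s' hs' hle hcard => by
        have := eq_of_subset_of_card_le (monotone_filter_right S fun t _ ht => ht.trans hle)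
          hcard.ge
        have hs's : s' ∈ {t ∈ S | t ≤ s} := by rw [this]; exact mem_filter.2 ⟨hs', le_rfl⟩
        exact hle.antisymm (mem_filter.1 hs's).2
    intro s hs s' hs' hcard
    rcases hS.total hs hs' with h | h
    exacts [key s hs s' hs' h hcard, (key s' hs' s hs h hcard.symm).symm]
  refine eq_of_subset_of_card_le (fun i hi => ?_) (by rw [card_image_of_injOn hinj]; simp)
  obtain ⟨s, hs, rfl⟩ := mem_image.1 hi
  exact mem_Icc.2 ⟨card_pos.2 ⟨s, mem_filter.2 ⟨hs, le_rfl⟩⟩, card_filter_le _ _⟩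

lemma sum_antidiagonal_union_succ_mul {R : Type*} [CommSemiring R] {f g : ℕ → R} {A B : R}
    (j : ℕ) (hf : ∀ i, 1 ≤ i → i ≤ j + 1 → f i = A) (hg : ∀ i, 1 ≤ i → i ≤ j + 1 → g i = B)
    (hf' : f (j + 2) = 0) (hg' : g (j + 2) = 0) :
    ∑ ij ∈ antidiagonal (j + 1) ∪ antidiagonal (j + 2), f ij.1 * g ij.2 =
      (2 * j + 1) * (A * B) + f 0 * B + A * g 0 := by
  have hdisj : Disjoint (antidiagonal (j + 1)) (antidiagonal (j + 2)) :=
    disjoint_left.2 fun ij h h' => by rw [HasAntidiagonal.mem_antidiagonal] at h h'; omega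
  have hconst : ∀ n, n ≤ j + 1 → ∑ i ∈ range n, f (i + 1) * g (n + 1 - (i + 1)) = n * (A * B) :=
    fun n hn => by
      rw [sum_congr rfl (g := fun _ => A * B) fun i hi => by
        rw [mem_range] at hi
        rw [hf _ (by omega) (by omega), hg _ (by omega) (by omega)],
        sum_const, card_range, nsmul_eq_mul]
  rw [sum_union hdisj, Nat.sum_antidiagonal_eq_sum_range_succ (fun i j => f i * g j),
    Nat.sum_antidiagonal_eq_sum_range_succ (fun i j => f i * g j), sum_range_succ',
    sum_range_succ, sum_range_succ', sum_range_succ, hconst j (by omega), hconst (j + 1) le_rfl,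
    hf (j + 1) (by omega) le_rfl]
  simp only [Nat.sub_self, Nat.sub_zero, hg (j + 1) (by omega) le_rfl, hf', hg']
  push_cast
  ring

lemma isChain_range_of_le_imp_le {α γ δ : Type*} [LinearOrder γ] [LE δ] {F : α → δ}
    (h : α → γ) (hF : ∀ a a', h a ≤ h a' → F a ≤ F a') : IsChain (· ≤ ·) (Set.range F) := by
  rintro _ ⟨a, rfl⟩ _ ⟨a', rfl⟩ -
  exact (le_total (h a) (h a')).imp (hF a a') (hF a' a)

lemma not_isChain_range_of {α β : Type*} {F : α → β → Bool} {a a' : α} {b b' : β}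
    (h₁ : F a b = true) (h₂ : F a' b = false) (h₃ : F a' b' = true) (h₄ : F a b' = false) :
    ¬ IsChain (· ≤ ·) (Set.range F) := fun hC => by
  rcases hC.total (Set.mem_range_self a) (Set.mem_range_self a') with h | h
  · exact absurd (h b) (by simp [h₁, h₂])
  · exact absurd (h b') (by simp [h₃, h₄])

lemma OrientAcyclic.of_lt {V γ : Type*} [Preorder γ] {f : V → V → Bool} (K : V → γ)
    (hK : ∀ u v, f u v = true → K v < K u) : OrientAcyclic f := fun v hv => by
  have : IsTrans γ (fun x y => y < x) := ⟨fun _ _ _ h₁ h₂ => h₂.trans h₁⟩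
  have hKv : Relation.TransGen (fun x y : γ => y < x) (K v) (K v) :=
    Relation.TransGen.lift K hK v v hv
  rw [Relation.transGen_eq_self] at hKv
  exact lt_irrefl _ hKv

namespace Finpartition

variable {α : Type*} [Fintype α] [DecidableEq α]

def partOf (P : Finpartition (univ : Finset α)) (x : α) : P.parts :=
  ⟨P.part x, P.part_mem.2 (mem_univ x)⟩

lemma partOf_surjective (P : Finpartition (univ : Finset α)) : Surjective P.partOf := by
  rintro ⟨t, ht⟩
  obtain ⟨x, -, hx⟩ := P.part_surjOn ht
  exact ⟨x, Subtype.ext hx⟩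

lemma partOf_eq_partOf_iff (P : Finpartition (univ : Finset α)) {x y : α} :
    P.partOf x = P.partOf y ↔ x ∈ P.part y := by
  rw [P.mem_part_iff_part_eq_part (mem_univ x) (mem_univ y), partOf, partOf, Subtype.mk.injEq]

lemma ext_partOf {P Q : Finpartition (univ : Finset α)}
    (h : ∀ x y, P.partOf x = P.partOf y ↔ Q.partOf x = Q.partOf y) : P = Q := by
  have hpart : ∀ y, P.part y = Q.part y := fun y => by
    ext x
    rw [← partOf_eq_partOf_iff, ← partOf_eq_partOf_iff, h]
  ext t
  constructor <;> intro ht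
  · obtain ⟨x, -, rfl⟩ := P.part_surjOn ht
    exact hpart x ▸ Q.part_mem.2 (mem_univ x)
  · obtain ⟨x, -, rfl⟩ := Q.part_surjOn ht
    exact (hpart x).symm ▸ P.part_mem.2 (mem_univ x)

end Finpartition

section Surjections

variable {α γ : Type*} [Fintype α] [DecidableEq α] [Fintype γ]

noncomputable def labelledPartitionEquivSurjective [DecidableEq γ] :
    (Σ P : {P : Finpartition (univ : Finset α) // #P.parts = Fintype.card γ}, P.1.parts ≃ γ) ≃
      {g : α → γ // Surjective g} := by
  refine Equiv.ofBijective (fun x => ⟨x.2 ∘ x.1.1.partOf, x.2.surjective.comp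
    x.1.1.partOf_surjective⟩) ⟨?_, ?_⟩
  · rintro ⟨⟨P, hP⟩, e⟩ ⟨⟨Q, hQ⟩, e'⟩ h
    have hg : e ∘ P.partOf = e' ∘ Q.partOf := congrArg Subtype.val h
    obtain rfl : P = Q := Finpartition.ext_partOf fun x y => by
      rw [← e.injective.eq_iff, ← e'.injective.eq_iff]
      exact iff_of_eq (congrArg₂ (· = ·) (congrFun hg x) (congrFun hg y))
    obtain rfl : e = e' := Equiv.ext <| (Finpartition.partOf_surjective P).forall.2 (congrFun hg)
    rfl
  · rintro ⟨g, hg⟩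
    let P := Finpartition.ofSetoid (Setoid.ker g)
    have hP : ∀ x y, P.partOf x = P.partOf y ↔ g x = g y := fun x y => by
      rw [P.partOf_eq_partOf_iff, Finpartition.mem_part_ofSetoid_iff_rel]
      exact eq_comm
    let s := surjInv P.partOf_surjective
    have hs : ∀ x, g (s (P.partOf x)) = g x := fun x =>
      (hP _ _).1 (surjInv_eq P.partOf_surjective _)
    have hbij : Bijective (g ∘ s) := by
      refine ⟨fun p q hpq => ?_, fun c => ?_⟩
      · rw [← surjInv_eq P.partOf_surjective p, ← surjInv_eq P.partOf_surjective q]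
        exact (hP _ _).2 hpq
      · obtain ⟨x, rfl⟩ := hg c
        exact ⟨P.partOf x, hs x⟩
    let e := Equiv.ofBijective _ hbij
    refine ⟨⟨⟨P, ?_⟩, e⟩, Subtype.ext (funext hs)⟩
    rw [← Fintype.card_coe, Fintype.card_congr e]

lemma card_surjective :
    Nat.card {g : α → γ // Surjective g} = (Fintype.card γ)! *
      Nat.card {P : Finpartition (univ : Finset α) // #P.parts = Fintype.card γ} := by
  classical
  rw [← Nat.card_congr labelledPartitionEquivSurjective, Nat.card_sigma]
  have hlabel : ∀ P : {P : Finpartition (univ : Finset α) // #P.parts = Fintype.card γ},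
      Nat.card (P.1.parts ≃ γ) = (Fintype.card γ)! := fun P => by
    rw [Nat.card_eq_fintype_card, Fintype.card_equiv (Fintype.equivOfCardEq (by simpa using P.2))]
    simpa using congrArg Nat.factorial P.2
  rw [Finset.sum_congr rfl fun P _ => hlabel P, sum_const, Finset.card_univ, smul_eq_mul, mul_comm,
    Nat.card_eq_fintype_card]

end Surjections

lemma card_surjective_eq_stirling2 {α : Type*} [Fintype α] (K : ℕ) :
    Nat.card {g : α → Fin K // Surjective g} = K ! * stirling2 (Fintype.card α) K := by
  rw [stirling2, ← Fintype.card_fin K, ← card_surjective, Fintype.card_fin]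
  exact Nat.card_congr <| ((Fintype.equivFin α).arrowCongr (.refl _)).subtypeEquiv fun g =>
    ((Fintype.equivFin α).symm.surjective.of_comp_iff g).symm

section Hitting

variable {α : Type*} {k : ℕ}

def HitsNonzero (σ : α → Fin (k + 1)) : Prop := ∀ j ≠ 0, ∃ a, σ a = j

lemma HitsNonzero.exists_val_eq {σ : α → Fin (k + 1)} (hσ : HitsNonzero σ) {i : ℕ}
    (hi : 1 ≤ i) (hik : i ≤ k) : ∃ a, (σ a : ℕ) = i := by
  obtain ⟨a, ha⟩ := hσ ⟨i, by omega⟩ (Fin.ne_of_val_ne (by simp only [Fin.val_zero]; omega))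
  exact ⟨a, by simp [ha]⟩

lemma hitsNonzero_of_exists_val_eq {σ : α → Fin (k + 1)}
    (h : ∀ i, 1 ≤ i → i ≤ k → ∃ a, (σ a : ℕ) = i) : HitsNonzero σ := fun j hj => by
  have : (j : ℕ) ≠ 0 := fun h => hj (Fin.ext h)
  obtain ⟨a, ha⟩ := h j (by omega) (by omega)
  exact ⟨a, Fin.ext ha⟩

lemma HitsNonzero.perm_comp {σ : α → Fin (k + 1)} (hσ : HitsNonzero σ)
    {π : Equiv.Perm (Fin (k + 1))} (hπ : π 0 = 0) : HitsNonzero (π ∘ σ) := fun j hj => by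
  obtain ⟨a, ha⟩ := hσ (π.symm j) (by rwa [Ne, π.symm_apply_eq, hπ])
  exact ⟨a, by simp [ha]⟩

lemma HitsNonzero.le_card [Fintype α] {σ : α → Fin (k + 1)} (hσ : HitsNonzero σ) :
    k ≤ Fintype.card α := by
  classical
  calc k = #(Icc 1 k) := by simp
    _ ≤ #(univ.image fun a => (σ a : ℕ)) := card_le_card fun i hi => by
        obtain ⟨a, ha⟩ := hσ.exists_val_eq (mem_Icc.1 hi).1 (mem_Icc.1 hi).2
        exact mem_image.2 ⟨a, mem_univ a, ha⟩
    _ ≤ Fintype.card α := card_image_le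

lemma card_hitsNonzero_val_eq_of_lt (a₀ : α) {i : ℕ} (hi : k < i) :
    Nat.card {σ : α → Fin (k + 1) // HitsNonzero σ ∧ (σ a₀ : ℕ) = i} = 0 := by
  rw [Nat.card_eq_zero]
  exact Or.inl ⟨fun σ => by have := (σ.1 a₀).isLt; omega⟩

lemma card_hitsNonzero_val_eq_of_pos (a₀ : α) {i j : ℕ} (hi : 1 ≤ i) (hik : i ≤ k)
    (hj : 1 ≤ j) (hjk : j ≤ k) :
    Nat.card {σ : α → Fin (k + 1) // HitsNonzero σ ∧ (σ a₀ : ℕ) = i} =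
      Nat.card {σ : α → Fin (k + 1) // HitsNonzero σ ∧ (σ a₀ : ℕ) = j} := by
  set I : Fin (k + 1) := ⟨i, by omega⟩
  set J : Fin (k + 1) := ⟨j, by omega⟩
  have hI : ∀ x : Fin (k + 1), (x : ℕ) = i ↔ x = I := fun x => by simp [Fin.ext_iff, I]
  have hJ : ∀ x : Fin (k + 1), (x : ℕ) = j ↔ x = J := fun x => by simp [Fin.ext_iff, J]
  let π := Equiv.swap I J
  have hπ : π 0 = 0 := Equiv.swap_apply_of_ne_of_ne
    (Fin.ne_of_val_ne (by simp only [I, Fin.val_zero]; omega))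
    (Fin.ne_of_val_ne (by simp only [J, Fin.val_zero]; omega))
  refine Nat.card_congr <| (Equiv.arrowCongr (.refl α) π).subtypeEquiv fun σ => ?_
  have hσ : π ∘ (π ∘ σ) = σ := by ext a; simp [π]
  refine and_congr ⟨fun h => h.perm_comp hπ, fun h => hσ ▸ h.perm_comp hπ⟩ ?_
  simp only [Equiv.arrowCongr_apply, comp_apply, Equiv.refl_symm, Equiv.refl_apply]
  rw [hI, hJ, ← π.apply_eq_iff_eq, Equiv.swap_apply_left]

variable [Fintype α]

def hitsNonzeroProdEquivSurjective :
    {σ : α → Fin (k + 1) // HitsNonzero σ} × Fin (k + 1) ≃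
      {g : Option α → Fin (k + 1) // Surjective g} where
  toFun x := ⟨fun o => Equiv.swap 0 x.2 (o.elim 0 x.1.1), fun j => by
    by_cases hj : Equiv.swap 0 x.2 j = 0
    · exact ⟨none, (Equiv.swap_apply_eq_iff.1 hj).symm⟩
    · obtain ⟨a, ha⟩ := x.1.2 _ hj
      exact ⟨some a, by simp [ha]⟩⟩
  invFun g := (⟨fun a => Equiv.swap 0 (g.1 none) (g.1 (some a)), fun j hj => by
      obtain ⟨o, ho⟩ := g.2 (Equiv.swap 0 (g.1 none) j)
      cases o with
      | none =>
        exact absurd (by rw [Equiv.swap_apply_eq_iff.1 ho.symm, Equiv.swap_apply_right]) hj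
      | some a => exact ⟨a, by simp [ho]⟩⟩, g.1 none)
  left_inv x := by
    ext <;> simp
  right_inv g := by
    ext o
    cases o <;> simp

lemma card_hitsNonzero :
    Nat.card {σ : α → Fin (k + 1) // HitsNonzero σ} =
      k ! * stirling2 (Fintype.card α + 1) (k + 1) := by
  have h := Nat.card_congr (hitsNonzeroProdEquivSurjective (α := α) (k := k))
  rw [Nat.card_prod, card_surjective_eq_stirling2, Fintype.card_option,
    Nat.card_eq_fintype_card (α := Fin _), Fintype.card_fin, Nat.factorial_succ] at h
  exact Nat.eq_of_mul_eq_mul_right (by omega : 0 < k + 1) (h.trans (by ring))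

lemma card_hitsNonzero_val_eq_zero [DecidableEq α] (a₀ : α) :
    Nat.card {σ : α → Fin (k + 1) // HitsNonzero σ ∧ (σ a₀ : ℕ) = 0} =
      k ! * stirling2 (Fintype.card α) (k + 1) := by
  have hcard : Fintype.card {a // a ≠ a₀} + 1 = Fintype.card α := by
    have := Fintype.card_pos_iff.2 ⟨a₀⟩
    simp only [ne_eq, Fintype.card_subtype_compl, Fintype.card_unique]
    omega
  rw [← hcard, ← card_hitsNonzero]
  refine Nat.card_congr
    { toFun := fun σ => ⟨σ.1 ∘ Subtype.val, fun j hj => ?_⟩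
      invFun := fun σ => ⟨fun a => if h : a = a₀ then 0 else σ.1 ⟨a, h⟩, fun j hj => ?_, by simp⟩
      left_inv := fun σ => ?_
      right_inv := fun σ => ?_ }
  · obtain ⟨a, ha⟩ := σ.2.1 j hj
    refine ⟨⟨a, ?_⟩, ha⟩
    rintro rfl
    exact hj (Fin.ext (ha ▸ σ.2.2))
  · obtain ⟨⟨a, ha₀⟩, ha⟩ := σ.2 j hj
    exact ⟨a, by simp [ha₀, ha]⟩
  · ext a
    by_cases h : a = a₀
    · subst h
      simp [σ.2.2]
    · simp [h]
  · ext ⟨a, ha⟩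
    simp [ha]

lemma sum_card_hitsNonzero_val_eq (a₀ : α) :
    ∑ i ∈ range (k + 1), Nat.card {σ : α → Fin (k + 1) // HitsNonzero σ ∧ (σ a₀ : ℕ) = i} =
      k ! * stirling2 (Fintype.card α + 1) (k + 1) := by
  rw [← card_hitsNonzero, Nat.card_eq_sum_card_fiberwise fun σ _ => mem_range.2 (σ a₀).isLt]

lemma card_hitsNonzero_val_eq_one (a₀ : α) (j : ℕ) :
    (Nat.card {σ : α → Fin (j + 1 + 1) // HitsNonzero σ ∧ (σ a₀ : ℕ) = 1} : ℚ) =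
      j ! * ((stirling2 (Fintype.card α + 1) (j + 2) : ℚ) -
        stirling2 (Fintype.card α) (j + 2)) := by
  classical
  have hsum := sum_card_hitsNonzero_val_eq (k := j + 1) a₀
  rw [sum_range_succ', sum_congr rfl fun i hi => card_hitsNonzero_val_eq_of_pos a₀ (j := 1)
    (by omega) (by simpa using hi) le_rfl (by omega), sum_const, card_range, smul_eq_mul,
    card_hitsNonzero_val_eq_zero, Nat.factorial_succ] at hsum
  have hj : ((j : ℚ) + 1) ≠ 0 := by positivity
  apply mul_left_cancel₀ hj
  have := congrArg (Nat.cast : ℕ → ℚ) hsum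
  push_cast at this
  linear_combination this

end Hitting

section BipartiteOrientation

variable {α β : Type*}

def matrixOrientation (M : α → β → Bool) : α ⊕ β → α ⊕ β → Bool
  | .inl a, .inr b => M a b
  | .inr b, .inl a => !M a b
  | _, _ => false

lemma isOrientation_matrixOrientation (M : α → β → Bool) :
    IsOrientation (completeBipartiteGraph α β) (matrixOrientation M) := by
  constructor <;> rintro (a | b) (a' | b') h <;> simp_all [matrixOrientation]

lemma matrixOrientation_eq {f : α ⊕ β → α ⊕ β → Bool}
    (hf : IsOrientation (completeBipartiteGraph α β) f) :
    matrixOrientation (fun a b => f (.inl a) (.inr b)) = f := by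
  ext (a | b) (a' | b') <;> simp [matrixOrientation, hf.2, hf.1 (.inr _) (.inl _)]

lemma orientAcyclic_matrixOrientation_iff (M : α → β → Bool) :
    OrientAcyclic (matrixOrientation M) ↔ IsChain (· ≤ ·) (Set.range M) := by
  constructor
  · rintro hM _ ⟨a, rfl⟩ _ ⟨a', rfl⟩ -
    by_contra! h
    obtain ⟨b, hb, hb'⟩ : ∃ b, M a b = true ∧ M a' b = false := by
      simpa [Pi.le_def, Bool.le_iff_imp] using h.1
    obtain ⟨b', hb'', hb'''⟩ : ∃ b, M a' b = true ∧ M a b = false := by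
      simpa [Pi.le_def, Bool.le_iff_imp] using h.2
    refine hM (.inl a) (.tail (.tail (.tail (.single (b := .inr b) ?_) (c := .inl a') ?_)
      (c := .inr b') ?_) ?_) <;> simp [matrixOrientation, *]
  · intro hM
    -- `b` is compared with the least row containing it, and placed just below that row
    refine .of_lt (γ := Lex ((β → Bool) × Bool))
      (Sum.elim (fun a => toLex (M a, true)) fun b => toLex (⨅ (a) (_ : M a b = true), M a, false))
      ?_
    rintro (a | b) (a' | b') h <;>
      simp only [matrixOrientation, Bool.false_eq_true, Bool.not_eq_true'] at h
    · obtain hlt | heq := (iInf₂_le a h : ⨅ (a) (_ : M a b' = true), M a ≤ M a).lt_or_eq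
      exacts [Prod.Lex.toLex_lt_toLex.2 (.inl hlt),
        Prod.Lex.toLex_lt_toLex.2 (.inr ⟨heq, Bool.false_lt_true⟩)]
    · have hle : M a' ≤ ⨅ (a) (_ : M a b = true), M a := le_iInf₂ fun a ha =>
        (hM.total (Set.mem_range_self a') (Set.mem_range_self a)).resolve_right fun h' => by
          simpa [h, ha] using Bool.le_iff_imp.1 (h' b)
      have hlt : ¬ (⨅ (a) (_ : M a b = true), M a) ≤ M a' := fun h' => by
        have : true ≤ M a' b := (le_iInf₂ fun a (ha : M a b = true) => ha.ge).trans
          (by simpa only [iInf_apply] using h' b)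
        exact absurd this (by simp [h])
      exact Prod.Lex.toLex_lt_toLex.2 (.inl (lt_of_le_not_ge hle hlt))

variable [DecidableEq α] [DecidableEq β]

def flipEntry (M : α → β → Bool) (a₀ : α) (b₀ : β) : α → β → Bool :=
  fun a b => if a = a₀ ∧ b = b₀ then !M a b else M a b

lemma flipEdge_matrixOrientation (M : α → β → Bool) (a₀ : α) (b₀ : β) :
    flipEdge (matrixOrientation M) (.inl a₀) (.inr b₀) =
      matrixOrientation (flipEntry M a₀ b₀) := by
  ext (a | b) (a' | b') <;> simp only [flipEdge, matrixOrientation, flipEntry] <;> split_ifs <;>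
    simp_all

lemma card_acyclic_flippable_eq (a₀ : α) (b₀ : β) :
    Nat.card {f : α ⊕ β → α ⊕ β → Bool // IsOrientation (completeBipartiteGraph α β) f ∧
        OrientAcyclic f ∧ OrientAcyclic (flipEdge f (.inl a₀) (.inr b₀))} =
      Nat.card {M : α → β → Bool //
        IsChain (· ≤ ·) (Set.range M) ∧ IsChain (· ≤ ·) (Set.range (flipEntry M a₀ b₀))} := by
  simp only [← orientAcyclic_matrixOrientation_iff, ← flipEdge_matrixOrientation]
  refine Nat.card_congr
    { toFun := fun f => ⟨fun a b => f.1 (.inl a) (.inr b), by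
        rw [matrixOrientation_eq f.2.1]; exact f.2.2⟩
      invFun := fun M => ⟨matrixOrientation M.1, isOrientation_matrixOrientation M.1, M.2⟩
      left_inv := fun f => Subtype.ext (matrixOrientation_eq f.2.1)
      right_inv := fun M => rfl }

end BipartiteOrientation

section Staircase

variable {α β : Type*} (k : ℕ)

def staircaseRow (τ : β → Fin (k + 1)) (i : ℕ) : β → Bool := fun b => decide (k + 1 ≤ i + τ b)

def staircase (σ : α → Fin (k + 1)) (τ : β → Fin (k + 1)) : α → β → Bool :=
  fun a => staircaseRow k τ (σ a)

variable {k} {σ : α → Fin (k + 1)} {τ : β → Fin (k + 1)}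

lemma staircaseRow_mono {i i' : ℕ} (h : i ≤ i') : staircaseRow k τ i ≤ staircaseRow k τ i' :=
  fun b => Bool.le_iff_imp.2 fun hb => by
    simp only [staircaseRow, decide_eq_true_eq] at hb ⊢
    omega

lemma staircaseRow_le_staircaseRow_iff (hτ : HitsNonzero τ) {i i' : ℕ} (hi : 1 ≤ i)
    (hik : i ≤ k) : staircaseRow k τ i ≤ staircaseRow k τ i' ↔ i ≤ i' := by
  refine ⟨fun h => ?_, staircaseRow_mono⟩
  obtain ⟨b, hb⟩ := hτ.exists_val_eq (i := k + 1 - i) (by omega) (by omega)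
  have := Bool.le_iff_imp.1 (h b) (by simp only [staircaseRow, decide_eq_true_eq]; omega)
  simp only [staircaseRow, decide_eq_true_eq] at this
  omega

lemma staircaseRow_zero : staircaseRow k τ 0 = ⊥ :=
  funext fun b => by
    simp only [staircaseRow, Pi.bot_apply, bot_eq_false, decide_eq_false_iff_not]
    omega

lemma staircaseRow_injOn (hτ : HitsNonzero τ) : Set.InjOn (staircaseRow k τ) (Icc 1 k) :=
  fun i hi i' hi' h => by
  simp only [coe_Icc, Set.mem_Icc] at hi hi'
  exact ((staircaseRow_le_staircaseRow_iff hτ hi.1 hi.2).1 h.le).antisymm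
    ((staircaseRow_le_staircaseRow_iff hτ hi'.1 hi'.2).1 h.ge)

lemma isChain_range_staircase : IsChain (· ≤ ·) (Set.range (staircase k σ τ)) :=
  isChain_range_of_le_imp_le σ fun _ _ h => staircaseRow_mono h

variable [DecidableEq α] [DecidableEq β]

lemma flipEntry_staircase_eq_true_iff (a₀ : α) (b₀ : β) (a : α) (b : β) :
    flipEntry (staircase k σ τ) a₀ b₀ a b = true ↔
      if a = a₀ ∧ b = b₀ then (σ a : ℕ) + τ b < k + 1 else k + 1 ≤ (σ a : ℕ) + τ b := by
  simp only [flipEntry, staircase, staircaseRow]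
  split_ifs <;> simp

lemma isChain_range_flipEntry_staircase_iff (hσ : HitsNonzero σ) (hτ : HitsNonzero τ)
    (a₀ : α) (b₀ : β) :
    IsChain (· ≤ ·) (Set.range (flipEntry (staircase k σ τ) a₀ b₀)) ↔
      (σ a₀ : ℕ) + τ b₀ = k ∨ (σ a₀ : ℕ) + τ b₀ = k + 1 := by
  have hF := flipEntry_staircase_eq_true_iff (σ := σ) (τ := τ) a₀ b₀
  have hσ₀ := (σ a₀).isLt
  have hτ₀ := (τ b₀).isLt
  constructor
  · intro hC
    by_contra! h
    -- rows `a₀` and `a₁` (of height `σ a₀ ± 1`) become incomparable, as columns `b₀` and `b₁` show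
    rcases Nat.lt_or_gt_of_ne h.1 with hlt | hgt
    · obtain ⟨a₁, ha₁⟩ := hσ.exists_val_eq (i := σ a₀ + 1) (by omega) (by omega)
      obtain ⟨b₁, hb₁⟩ := hτ.exists_val_eq (i := k - σ a₀) (by omega) (by omega)
      have ha : a₁ ≠ a₀ := by rintro rfl; omega
      have hb : b₁ ≠ b₀ := by rintro rfl; omega
      refine not_isChain_range_of (a := a₀) (a' := a₁) (b := b₀) (b' := b₁) ?_ ?_ ?_ ?_ hC <;>
        simp only [← Bool.not_eq_true, hF, ha, hb, and_self, and_true, and_false, ↓reduceIte] <;>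
        omega
    · obtain ⟨a₁, ha₁⟩ := hσ.exists_val_eq (i := σ a₀ - 1) (by omega) (by omega)
      obtain ⟨b₁, hb₁⟩ := hτ.exists_val_eq (i := k + 1 - σ a₀) (by omega) (by omega)
      have ha : a₁ ≠ a₀ := by rintro rfl; omega
      have hb : b₁ ≠ b₀ := by rintro rfl; omega
      refine not_isChain_range_of (a := a₁) (a' := a₀) (b := b₀) (b' := b₁) ?_ ?_ ?_ ?_ hC <;>
        simp only [← Bool.not_eq_true, hF, ha, hb, and_self, and_true, and_false, ↓reduceIte] <;>
        omega
  · intro h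
    -- the flipped row `a₀` lies strictly between the staircase rows of heights
    -- `σ a₀` and `σ a₀ + 1` (if `σ a₀ + τ b₀ = k`), or `σ a₀ - 1` and `σ a₀` (if it is `k + 1`)
    refine isChain_range_of_le_imp_le
      (fun a => if a = a₀ then 2 * σ a₀ + 2 * k + 1 - 2 * (σ a₀ + τ b₀) else 2 * (σ a : ℕ))
      fun a a' hle b => Bool.le_iff_imp.2 fun hab => ?_
    rw [hF] at hab ⊢
    have := (σ a).isLt
    have := (σ a').isLt
    have := (τ b).isLt
    by_cases ha : a = a₀ <;> by_cases ha' : a' = a₀ <;> by_cases hb : b = b₀ <;>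
      simp only [ha, ha', hb, and_self, and_true, and_false, ↓reduceIte] at hle hab ⊢ <;> omega

end Staircase

section ChainRank

variable {α β : Type*} [Fintype α] [Fintype β]

open Classical

noncomputable def rowSupports (M : α → β → Bool) : Finset (β → Bool) := (univ.image M).erase ⊥

noncomputable def chainRank (M : α → β → Bool) : ℕ := #(rowSupports M)

noncomputable def rowRank (M : α → β → Bool) (a : α) : ℕ := #{s ∈ rowSupports M | s ≤ M a}

noncomputable def colRank (M : α → β → Bool) (b : β) : ℕ := #{s ∈ rowSupports M | s b = true}

lemma mem_rowSupports {M : α → β → Bool} {s : β → Bool} :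
    s ∈ rowSupports M ↔ s ≠ ⊥ ∧ ∃ a, M a = s := by
  simp [rowSupports]

lemma rowRank_le (M : α → β → Bool) (a : α) : rowRank M a ≤ chainRank M := card_filter_le _ _

lemma colRank_le (M : α → β → Bool) (b : β) : colRank M b ≤ chainRank M := card_filter_le _ _

variable {M : α → β → Bool}

lemma rowRank_mono {a a' : α} (h : M a ≤ M a') : rowRank M a ≤ rowRank M a' :=
  card_le_card (monotone_filter_right _ fun _ _ hs => hs.trans h)

lemma IsChain.rowSupports (hM : IsChain (· ≤ ·) (Set.range M)) :
    IsChain (· ≤ ·) (rowSupports M : Set (β → Bool)) :=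
  hM.mono fun _ hs => (mem_rowSupports.1 hs).2

lemma apply_eq_true_iff_chainRank_lt (hM : IsChain (· ≤ ·) (Set.range M)) (a : α) (b : β) :
    M a b = true ↔ chainRank M < rowRank M a + colRank M b := by
  have hunion := card_union_add_card_inter {s ∈ rowSupports M | s ≤ M a}
    {s ∈ rowSupports M | s b = true}
  have hsub : {s ∈ rowSupports M | s ≤ M a} ∪ {s ∈ rowSupports M | s b = true} ⊆
      rowSupports M := union_subset (filter_subset _ _) (filter_subset _ _)
  rw [rowRank, colRank, chainRank, ← hunion]
  constructor
  · intro hab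
    have hMa : M a ∈ rowSupports M :=
      mem_rowSupports.2 ⟨fun h => by simp [h] at hab, a, rfl⟩
    have hcover : rowSupports M ⊆
        {s ∈ rowSupports M | s ≤ M a} ∪ {s ∈ rowSupports M | s b = true} := fun s hs => by
      rcases hM.rowSupports.total hs hMa with h | h
      · exact mem_union_left _ (mem_filter.2 ⟨hs, h⟩)
      · exact mem_union_right _ (mem_filter.2 ⟨hs, Bool.le_iff_imp.1 (h b) hab⟩)
    have hinter : 0 < #({s ∈ rowSupports M | s ≤ M a} ∩ {s ∈ rowSupports M | s b = true}) :=
      card_pos.2 ⟨M a, by simp [hMa, hab]⟩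
    have := card_le_card hcover
    omega
  · intro h
    by_contra hab
    have hinter : {s ∈ rowSupports M | s ≤ M a} ∩ {s ∈ rowSupports M | s b = true} = ∅ :=
      eq_empty_of_forall_notMem fun s hs => by
        simp only [mem_inter, mem_filter] at hs
        exact hab (Bool.le_iff_imp.1 (hs.1.2 b) hs.2.2)
    have := card_le_card hsub
    rw [hinter, card_empty] at h
    omega

lemma exists_rowRank_eq (hM : IsChain (· ≤ ·) (Set.range M)) {i : ℕ} (hi : 1 ≤ i)
    (hik : i ≤ chainRank M) : ∃ a, rowRank M a = i := by
  have : i ∈ (rowSupports M).image (fun s => #{t ∈ rowSupports M | t ≤ s}) := by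
    rw [image_card_filter_le_of_isChain hM.rowSupports]
    exact mem_Icc.2 ⟨hi, hik⟩
  obtain ⟨s, hs, rfl⟩ := mem_image.1 this
  obtain ⟨a, rfl⟩ := (mem_rowSupports.1 hs).2
  exact ⟨a, rfl⟩

lemma exists_colRank_eq (hM : IsChain (· ≤ ·) (Set.range M)) {j : ℕ} (hj : 1 ≤ j)
    (hjk : j ≤ chainRank M) : ∃ b, colRank M b = j := by
  obtain ⟨a, ha⟩ := exists_rowRank_eq hM (i := chainRank M + 1 - j) (by omega) (by omega)
  have hb : ∃ b, M a b = true ∧ colRank M b ≤ j := by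
    rcases (show j = chainRank M ∨ j < chainRank M by omega) with rfl | hj'
    · obtain ⟨s, hs, hsa⟩ : ∃ s ∈ rowSupports M, s ≤ M a := by
        by_contra! h
        simp only [rowRank, filter_false_of_mem h, card_empty] at ha
        omega
      obtain ⟨b, hb⟩ : ∃ b, s b = true := by
        by_contra! h
        exact (mem_rowSupports.1 hs).1 (funext fun b => by simpa using h b)
      exact ⟨b, Bool.le_iff_imp.1 (hsa b) hb, colRank_le M b⟩
    · obtain ⟨a', ha'⟩ := exists_rowRank_eq hM (i := chainRank M - j) (by omega) (by omega)
      have hnle : ¬ M a ≤ M a' := fun h => by have := rowRank_mono h; omega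
      obtain ⟨b, hab, ha'b⟩ : ∃ b, M a b = true ∧ M a' b = false := by
        simpa [Pi.le_def, Bool.le_iff_imp] using hnle
      refine ⟨b, hab, ?_⟩
      have := (apply_eq_true_iff_chainRank_lt hM a' b).not.1 (by simp [ha'b])
      omega
  obtain ⟨b, hab, hbj⟩ := hb
  have := (apply_eq_true_iff_chainRank_lt hM a b).1 hab
  exact ⟨b, by omega⟩

section
variable {k : ℕ} {σ : α → Fin (k + 1)} {τ : β → Fin (k + 1)}

lemma rowSupports_staircase (hσ : HitsNonzero σ) (hτ : HitsNonzero τ) :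
    rowSupports (staircase k σ τ) = (Icc 1 k).image (staircaseRow k τ) := by
  have hne : ∀ {i}, 1 ≤ i → i ≤ k → staircaseRow k τ i ≠ ⊥ := fun hi hik h => by
    have := (staircaseRow_le_staircaseRow_iff hτ hi hik (i' := 0)).1 (h ▸ staircaseRow_zero.ge)
    omega
  ext s
  simp only [mem_rowSupports, mem_image, mem_Icc, staircase]
  constructor
  · rintro ⟨hs, a, rfl⟩
    refine ⟨σ a, ⟨?_, by omega⟩, rfl⟩
    by_contra! h
    exact hs (by rw [Nat.lt_one_iff.1 h, staircaseRow_zero])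
  · rintro ⟨i, ⟨hi, hik⟩, rfl⟩
    obtain ⟨a, ha⟩ := hσ.exists_val_eq hi hik
    exact ⟨hne hi hik, a, by rw [ha]⟩

lemma chainRank_staircase (hσ : HitsNonzero σ) (hτ : HitsNonzero τ) :
    chainRank (staircase k σ τ) = k := by
  rw [chainRank, rowSupports_staircase hσ hτ, card_image_of_injOn (staircaseRow_injOn hτ)]
  simp

lemma card_filter_rowSupports_staircase (hσ : HitsNonzero σ) (hτ : HitsNonzero τ)
    (p : (β → Bool) → Prop) [DecidablePred p] :
    #{s ∈ rowSupports (staircase k σ τ) | p s} = #{i ∈ Icc 1 k | p (staircaseRow k τ i)} := by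
  rw [rowSupports_staircase hσ hτ, filter_image,
    card_image_of_injOn ((staircaseRow_injOn hτ).mono (filter_subset _ _))]

lemma rowRank_staircase (hσ : HitsNonzero σ) (hτ : HitsNonzero τ) (a : α) :
    rowRank (staircase k σ τ) a = σ a := by
  rw [rowRank, card_filter_rowSupports_staircase hσ hτ]
  have hfilter : {i ∈ Icc 1 k | staircaseRow k τ i ≤ staircase k σ τ a} = Icc 1 (σ a : ℕ) := by
    ext i
    rw [mem_filter, Finset.mem_Icc, Finset.mem_Icc]
    constructor
    · rintro ⟨⟨hi, hik⟩, h⟩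
      exact ⟨hi, (staircaseRow_le_staircaseRow_iff hτ hi hik).1 h⟩
    · rintro ⟨hi, h⟩
      exact ⟨⟨hi, h.trans (Nat.lt_succ_iff.1 (σ a).isLt)⟩, staircaseRow_mono h⟩
  rw [hfilter, Nat.card_Icc, Nat.add_sub_cancel]

lemma colRank_staircase (hσ : HitsNonzero σ) (hτ : HitsNonzero τ) (b : β) :
    colRank (staircase k σ τ) b = τ b := by
  rw [colRank, card_filter_rowSupports_staircase hσ hτ]
  have hfilter : {i ∈ Icc 1 k | staircaseRow k τ i b = true} = Icc (k + 1 - τ b) k := by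
    ext i
    rw [mem_filter, Finset.mem_Icc, Finset.mem_Icc]
    simp only [staircaseRow, decide_eq_true_eq]
    omega
  have := (τ b).isLt
  rw [hfilter, Nat.card_Icc]
  omega

end

variable (α β) in
noncomputable def staircaseEquiv (k : ℕ) :
    {p : (α → Fin (k + 1)) × (β → Fin (k + 1)) // HitsNonzero p.1 ∧ HitsNonzero p.2} ≃
      {M : α → β → Bool // IsChain (· ≤ ·) (Set.range M) ∧ chainRank M = k} where
  toFun p := ⟨staircase k p.1.1 p.1.2, isChain_range_staircase, chainRank_staircase p.2.1 p.2.2⟩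
  invFun M :=
    ⟨(fun a => ⟨rowRank M.1 a, Nat.lt_succ_of_le ((rowRank_le M.1 a).trans_eq M.2.2)⟩,
      fun b => ⟨colRank M.1 b, Nat.lt_succ_of_le ((colRank_le M.1 b).trans_eq M.2.2)⟩),
      hitsNonzero_of_exists_val_eq fun _ hi hik =>
        exists_rowRank_eq M.2.1 hi (hik.trans_eq M.2.2.symm),
      hitsNonzero_of_exists_val_eq fun _ hj hjk =>
        exists_colRank_eq M.2.1 hj (hjk.trans_eq M.2.2.symm)⟩
  left_inv p := by
    obtain ⟨⟨σ, τ⟩, hσ, hτ⟩ := p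
    ext a <;> simp [rowRank_staircase hσ hτ, colRank_staircase hσ hτ]
  right_inv M := by
    obtain ⟨M, hM, rfl⟩ := M
    ext a b
    simp only [staircase, staircaseRow]
    rw [Bool.eq_iff_iff, decide_eq_true_iff, apply_eq_true_iff_chainRank_lt hM,
      Nat.lt_iff_add_one_le]

end ChainRank

lemma card_flippable_staircase_zero {α β : Type*} (a₀ : α) (b₀ : β) :
    Nat.card {p : (α → Fin (0 + 1)) × (β → Fin (0 + 1)) //
        (HitsNonzero p.1 ∧ HitsNonzero p.2) ∧
          ((p.1 a₀ : ℕ) + p.2 b₀ = 0 ∨ (p.1 a₀ : ℕ) + p.2 b₀ = 0 + 1)} = 1 := by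
  have : Subsingleton (Fin (0 + 1)) := inferInstanceAs (Subsingleton (Fin 1))
  rw [Nat.card_eq_one_iff_unique]
  refine ⟨⟨fun p q => Subtype.ext (Subsingleton.elim _ _)⟩, ⟨⟨(0, 0), ⟨?_, ?_⟩, by simp⟩⟩⟩ <;>
    exact fun j hj => absurd (Subsingleton.elim j 0) hj

section Counting

variable {α β : Type*} [Fintype α] [Fintype β]

lemma card_flippable_chain_eq_sum [DecidableEq α] [DecidableEq β] (a₀ : α) (b₀ : β) :
    Nat.card {M : α → β → Bool //
        IsChain (· ≤ ·) (Set.range M) ∧ IsChain (· ≤ ·) (Set.range (flipEntry M a₀ b₀))} =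
      ∑ k ∈ range (min (Fintype.card α) (Fintype.card β) + 1),
        Nat.card {p : (α → Fin (k + 1)) × (β → Fin (k + 1)) //
          (HitsNonzero p.1 ∧ HitsNonzero p.2) ∧
            ((p.1 a₀ : ℕ) + p.2 b₀ = k ∨ (p.1 a₀ : ℕ) + p.2 b₀ = k + 1)} := by
  rw [Nat.card_eq_sum_card_fiberwise (f := chainRank) fun M hM => ?_]
  · refine sum_congr rfl fun k _ => Nat.card_congr <| Equiv.symm <|
      (Equiv.subtypeSubtypeEquivSubtypeInter _ _).symm.trans <|
        (Equiv.subtypeEquiv (staircaseEquiv α β k) fun p =>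
          (isChain_range_flipEntry_staircase_iff p.2.1 p.2.2 a₀ b₀).symm).trans <|
        (Equiv.subtypeSubtypeEquivSubtypeInter _ _).trans <|
          Equiv.subtypeEquivRight fun _ => and_right_comm
  · have hdata := ((staircaseEquiv α β _).symm ⟨M, hM.1, rfl⟩).2
    exact mem_range.2 (Nat.lt_succ_of_le (le_min hdata.1.le_card hdata.2.le_card))

lemma card_hitsNonzero_pair_eq_sum (a₀ : α) (b₀ : β) (k : ℕ) (t : Finset (ℕ × ℕ)) :
    Nat.card {p : (α → Fin (k + 1)) × (β → Fin (k + 1)) //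
        (HitsNonzero p.1 ∧ HitsNonzero p.2) ∧ ((p.1 a₀ : ℕ), (p.2 b₀ : ℕ)) ∈ t} =
      ∑ ij ∈ t, Nat.card {σ : α → Fin (k + 1) // HitsNonzero σ ∧ (σ a₀ : ℕ) = ij.1} *
        Nat.card {τ : β → Fin (k + 1) // HitsNonzero τ ∧ (τ b₀ : ℕ) = ij.2} := by
  rw [Nat.card_eq_sum_card_fiberwise (f := fun p => ((p.1 a₀ : ℕ), (p.2 b₀ : ℕ))) fun p hp => hp.2]
  refine sum_congr rfl fun ij hij => ?_
  rw [← Nat.card_prod]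
  refine Nat.card_congr ((Equiv.subtypeEquivRight fun p => ?_).trans Equiv.subtypeProdEquivProd)
  rw [Prod.ext_iff]
  constructor
  · rintro ⟨⟨⟨h₁, h₂⟩, -⟩, e₁, e₂⟩
    exact ⟨⟨h₁, e₁⟩, h₂, e₂⟩
  · rintro ⟨⟨h₁, e₁⟩, h₂, e₂⟩
    exact ⟨⟨⟨h₁, h₂⟩, by convert hij using 1; exact Prod.ext e₁ e₂⟩, e₁, e₂⟩

lemma card_flippable_staircase_succ (a₀ : α) (b₀ : β) (j : ℕ) :
    (Nat.card {p : (α → Fin (j + 1 + 1)) × (β → Fin (j + 1 + 1)) //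
        (HitsNonzero p.1 ∧ HitsNonzero p.2) ∧
          ((p.1 a₀ : ℕ) + p.2 b₀ = j + 1 ∨ (p.1 a₀ : ℕ) + p.2 b₀ = j + 1 + 1)} : ℚ) =
      (j ! : ℚ) ^ 2 *
        ((2 * j + 1) * stirling2 (Fintype.card α + 1) (j + 2) *
              stirling2 (Fintype.card β + 1) (j + 2)
          - j * (stirling2 (Fintype.card α + 1) (j + 2) * stirling2 (Fintype.card β) (j + 2)
            + stirling2 (Fintype.card α) (j + 2) * stirling2 (Fintype.card β + 1) (j + 2))
          - stirling2 (Fintype.card α) (j + 2) * stirling2 (Fintype.card β) (j + 2)) := by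
  classical
  have hcond : ∀ p : (α → Fin (j + 1 + 1)) × (β → Fin (j + 1 + 1)),
      ((p.1 a₀ : ℕ) + p.2 b₀ = j + 1 ∨ (p.1 a₀ : ℕ) + p.2 b₀ = j + 1 + 1) ↔
        ((p.1 a₀ : ℕ), (p.2 b₀ : ℕ)) ∈ antidiagonal (j + 1) ∪ antidiagonal (j + 2) := fun p => by
    simp only [mem_union, HasAntidiagonal.mem_antidiagonal]
  rw [Nat.card_congr (Equiv.subtypeEquivRight fun p => and_congr_right' (hcond p)),
    card_hitsNonzero_pair_eq_sum, Nat.cast_sum]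
  simp only [Nat.cast_mul]
  rw [sum_antidiagonal_union_succ_mul j
    (fun i hi hij => congrArg Nat.cast (card_hitsNonzero_val_eq_of_pos a₀ hi hij le_rfl (by omega)))
    (fun i hi hij => congrArg Nat.cast (card_hitsNonzero_val_eq_of_pos b₀ hi hij le_rfl (by omega)))
    (by rw [card_hitsNonzero_val_eq_of_lt a₀ (by omega), Nat.cast_zero])
    (by rw [card_hitsNonzero_val_eq_of_lt b₀ (by omega), Nat.cast_zero]),
    card_hitsNonzero_val_eq_one, card_hitsNonzero_val_eq_one, card_hitsNonzero_val_eq_zero,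
    card_hitsNonzero_val_eq_zero, Nat.factorial_succ]
  push_cast
  ring

end Counting

theorem card_flippable_formula_general (n₁ n₂ : ℕ) (a : Fin n₁) (b : Fin n₂) :
    (Nat.card {f : (Fin n₁ ⊕ Fin n₂) → (Fin n₁ ⊕ Fin n₂) → Bool //
        IsOrientation (completeBipartiteGraph (Fin n₁) (Fin n₂)) f ∧ OrientAcyclic f ∧
          OrientAcyclic (flipEdge f (Sum.inl a) (Sum.inr b))} : ℚ) =
      1 + ∑ k ∈ Finset.Icc 2 (min n₁ n₂ + 1),
        ((Nat.factorial (k - 2) : ℚ)) ^ 2 *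
          ((2 * (k : ℚ) - 3) * (stirling2 (n₁ + 1) k : ℚ) * (stirling2 (n₂ + 1) k : ℚ)
            - ((k : ℚ) - 2) * ((stirling2 (n₁ + 1) k : ℚ) * (stirling2 n₂ k : ℚ)
                + (stirling2 n₁ k : ℚ) * (stirling2 (n₂ + 1) k : ℚ))
            - (stirling2 n₁ k : ℚ) * (stirling2 n₂ k : ℚ)) := by
  rw [card_acyclic_flippable_eq, card_flippable_chain_eq_sum, Fintype.card_fin, Fintype.card_fin,
    sum_range_succ', card_flippable_staircase_zero, Nat.cast_add, Nat.cast_one, add_comm,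
    ← Finset.Ico_add_one_right_eq_Icc, sum_Ico_eq_sum_range, Nat.cast_sum]
  congr 1
  refine sum_congr (by congr 1) fun j _ => ?_
  rw [card_flippable_staircase_succ, Fintype.card_fin, Fintype.card_fin, add_comm 2 j,
    Nat.add_sub_cancel]
  push_cast
  ring

/-- The number `X` of acyclic orientations of `K_{n₁,n₂}` that remain acyclic when the edge
`e = {a,b}` is reversed equals `1 + ∑_{k=2}^{min(n₁,n₂)+1} ((k−2)!)² [(2k−3)S(n₁+1,k)S(n₂+1,k)
− (k−2)(S(n₁+1,k)S(n₂,k) + S(n₁,k)S(n₂+1,k)) − S(n₁,k)S(n₂,k)]`. -/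
theorem card_flippable_formula (n₁ n₂ : ℕ) (h₁ : 1 ≤ n₁) (h₂ : 1 ≤ n₂)
    (a : Fin n₁) (b : Fin n₂) :
    (Nat.card {f : (Fin n₁ ⊕ Fin n₂) → (Fin n₁ ⊕ Fin n₂) → Bool //
        IsOrientation (completeBipartiteGraph (Fin n₁) (Fin n₂)) f ∧ OrientAcyclic f ∧
          OrientAcyclic (flipEdge f (Sum.inl a) (Sum.inr b))} : ℚ) =
      1 + ∑ k ∈ Finset.Icc 2 (min n₁ n₂ + 1),
        ((Nat.factorial (k - 2) : ℚ)) ^ 2 *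
          ((2 * (k : ℚ) - 3) * (stirling2 (n₁ + 1) k : ℚ) * (stirling2 (n₂ + 1) k : ℚ)
            - ((k : ℚ) - 2) * ((stirling2 (n₁ + 1) k : ℚ) * (stirling2 n₂ k : ℚ)
                + (stirling2 n₁ k : ℚ) * (stirling2 (n₂ + 1) k : ℚ))
            - (stirling2 n₁ k : ℚ) * (stirling2 n₂ k : ℚ)) :=
  card_flippable_formula_general n₁ n₂ a b
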